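/- Let m ≥ 0 and let P ⊂ [0,1)² be a 2^{-m}-separated set (with respect to dist_H) of cardinality 2^{2m+1}. Then for every dyadic rectangle R ⊆ [0,1)² with |R| ≥ 2^{-2m-1}, the number of points of P in R equals 2^{2m+1}·|R|. -/

import Mathlib

/-!
Put `N = 2m + 1`. Inside a dyadic rectangle of area `2^{-N}` any two points are at
`dist_H ≤ 2^{-N/2} < 2^{-m}`, so it contains at most one point of `P`. The `2^N` cells of the
dyadic grid of mesh `2^{-u} × 2^{-(N-u)}` therefore separate the `2^N` points of `P`, so every
cell contains exactly one of them. A dyadic rectangle `R ⊆ [0,1)²` of width `2^{-u}` and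
height `2^{-v}` with `u + v ≤ N` is the union of `2^{N-u-v} = 2^N |R|` cells of that grid.
-/

open MeasureTheory
open scoped ENNReal

/-- A dyadic interval `[k·2^n, (k+1)·2^n)`. -/
def IsDyadicInterval (I : Set ℝ) : Prop :=
  ∃ k n : ℤ, I = Set.Ico ((k : ℝ) * 2 ^ n) (((k : ℝ) + 1) * 2 ^ n)

/-- An axis-parallel dyadic rectangle in the plane. -/
def IsDyadicRect (R : Set (ℝ × ℝ)) : Prop :=
  ∃ I J : Set ℝ, IsDyadicInterval I ∧ IsDyadicInterval J ∧ R = I ×ˢ J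

/-- `dist_H(p,q) = inf { |R|^{1/2} : R dyadic rectangle containing p and q }`. -/
noncomputable def distH (p q : ℝ × ℝ) : ℝ≥0∞ :=
  sInf {v | ∃ R : Set (ℝ × ℝ), IsDyadicRect R ∧ p ∈ R ∧ q ∈ R ∧ v = volume R ^ (1 / 2 : ℝ)}

def unitSq : Set (ℝ × ℝ) := Set.Ico (0 : ℝ) 1 ×ˢ Set.Ico (0 : ℝ) 1

def dyadicIco (n : ℕ) (k : ℤ) : Set ℝ := Set.Ico (k / 2 ^ n) ((k + 1) / 2 ^ n)

lemma mem_dyadicIco_iff {n : ℕ} {k : ℤ} {x : ℝ} : x ∈ dyadicIco n k ↔ ⌊x * 2 ^ n⌋ = k := by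
  rw [dyadicIco, Set.mem_Ico, Int.floor_eq_iff, div_le_iff₀ (by positivity),
    lt_div_iff₀ (by positivity)]

lemma mem_dyadicIco_iff_floor_mem_Ico {v : ℕ} (c : ℕ) {l : ℤ} {x : ℝ} :
    x ∈ dyadicIco v l ↔ ⌊x * 2 ^ (v + c)⌋ ∈ Finset.Ico (l * 2 ^ c) ((l + 1) * 2 ^ c) := by
  have hc : (0 : ℝ) < 2 ^ c := by positivity
  rw [Finset.mem_Ico, Int.le_floor, Int.floor_lt, dyadicIco, Set.mem_Ico,
    div_le_iff₀ (by positivity), lt_div_iff₀ (by positivity), pow_add, ← mul_assoc]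
  push_cast
  rw [mul_le_mul_iff_left₀ hc, mul_lt_mul_iff_left₀ hc]

lemma isDyadicInterval_dyadicIco (n : ℕ) (k : ℤ) : IsDyadicInterval (dyadicIco n k) :=
  ⟨k, -n, by simp [dyadicIco, zpow_neg, div_eq_mul_inv]⟩

lemma volume_dyadicIco (n : ℕ) (k : ℤ) : volume (dyadicIco n k) = ((2 : ℝ≥0∞) ^ n)⁻¹ := by
  rw [dyadicIco, Real.volume_Ico, ← sub_div, add_sub_cancel_left, one_div,
    ENNReal.ofReal_inv_of_pos (by positivity), ENNReal.ofReal_pow zero_le_two,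
    ENNReal.ofReal_ofNat]

lemma volume_dyadicIco_prod (a b : ℕ) (i j : ℤ) :
    volume (dyadicIco a i ×ˢ dyadicIco b j) = ((2 : ℝ≥0∞) ^ (a + b))⁻¹ := by
  rw [Measure.volume_eq_prod, Measure.prod_prod, volume_dyadicIco, volume_dyadicIco, pow_add,
    ENNReal.mul_inv (by simp) (by simp)]

lemma floor_mul_two_pow_mem_Ico {x : ℝ} (hx : x ∈ Set.Ico (0 : ℝ) 1) (n : ℕ) :
    ⌊x * 2 ^ n⌋ ∈ Finset.Ico 0 (2 ^ n : ℤ) := by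
  rw [Finset.mem_Ico, Int.floor_nonneg, Int.floor_lt]
  push_cast
  constructor
  · exact mul_nonneg hx.1 (by positivity)
  · exact mul_lt_of_lt_one_left (by positivity) hx.2

lemma IsDyadicInterval.nonempty {I : Set ℝ} (hI : IsDyadicInterval I) : I.Nonempty := by
  obtain ⟨k, s, rfl⟩ := hI
  exact Set.nonempty_Ico.2 (mul_lt_mul_of_pos_right (lt_add_one _) (zpow_pos two_pos s))

lemma IsDyadicInterval.exists_eq_dyadicIco {I : Set ℝ} (hI : IsDyadicInterval I)
    (hsub : I ⊆ Set.Ico 0 1) : ∃ n k, (0 ≤ k ∧ k < 2 ^ n) ∧ I = dyadicIco n k := by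
  obtain ⟨k, s, rfl⟩ := hI
  have hs : (0 : ℝ) < 2 ^ s := zpow_pos two_pos s
  obtain ⟨hlow, hupp⟩ := (Set.Ico_subset_Ico_iff
    (mul_lt_mul_of_pos_right (lt_add_one _) hs)).1 hsub
  have hk : (0 : ℝ) ≤ k := nonneg_of_mul_nonneg_left hlow hs
  obtain ⟨n, rfl⟩ : ∃ n : ℕ, s = -n := by
    refine Int.exists_eq_neg_ofNat ((zpow_le_one_iff_right₀ (one_lt_two (α := ℝ))).1 ?_)
    nlinarith
  simp only [zpow_neg, zpow_natCast, ← div_eq_mul_inv] at hk hupp ⊢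
  rw [div_le_one (by positivity)] at hupp
  exact ⟨n, k, ⟨by exact_mod_cast hk, by exact_mod_cast hupp⟩, rfl⟩

lemma IsDyadicRect.exists_eq_dyadicIco_prod {R : Set (ℝ × ℝ)} (hR : IsDyadicRect R)
    (hsub : R ⊆ unitSq) : ∃ u k v l, (0 ≤ k ∧ k < 2 ^ u) ∧ (0 ≤ l ∧ l < 2 ^ v) ∧
      R = dyadicIco u k ×ˢ dyadicIco v l := by
  obtain ⟨I, J, hI, hJ, rfl⟩ := hR
  obtain ⟨hIsub, hJsub⟩ := (Set.prod_subset_prod_iff.1 hsub).resolve_right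
    (by simp [hI.nonempty.ne_empty, hJ.nonempty.ne_empty])
  obtain ⟨u, k, hk, rfl⟩ := hI.exists_eq_dyadicIco hIsub
  obtain ⟨v, l, hl, rfl⟩ := hJ.exists_eq_dyadicIco hJsub
  exact ⟨u, k, v, l, hk, hl, rfl⟩

lemma distH_le_volume_rpow {p q : ℝ × ℝ} {R : Set (ℝ × ℝ)} (hR : IsDyadicRect R) (hp : p ∈ R)
    (hq : q ∈ R) : distH p q ≤ volume R ^ (1 / 2 : ℝ) :=
  sInf_le ⟨R, hR, hp, hq, rfl⟩

lemma subsingleton_inter_of_le_distH {δ : ℝ≥0∞} {P R : Set (ℝ × ℝ)}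
    (hsep : ∀ p ∈ P, ∀ q ∈ P, p ≠ q → δ ≤ distH p q) (hR : IsDyadicRect R)
    (hvol : volume R ^ (1 / 2 : ℝ) < δ) : (P ∩ R).Subsingleton := fun p hp q hq =>
  by_contra fun hpq =>
    ((hsep p hp.1 q hq.1 hpq).trans (distH_le_volume_rpow hR hp.2 hq.2)).not_gt hvol

lemma inv_two_pow_rpow_half_lt (m : ℕ) :
    ((2 : ℝ≥0∞) ^ (2 * m + 1))⁻¹ ^ (1 / 2 : ℝ) < ENNReal.ofReal (2 ^ (-(m : ℤ))) := by
  rw [zpow_neg, zpow_natCast, ENNReal.ofReal_inv_of_pos (by positivity),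
    ENNReal.ofReal_pow zero_le_two, ENNReal.ofReal_ofNat, one_div,
    ENNReal.rpow_inv_lt_iff two_pos, ENNReal.rpow_two, ← ENNReal.inv_pow, ← pow_mul,
    ENNReal.inv_lt_inv]
  exact_mod_cast Nat.pow_lt_pow_right one_lt_two (by omega)

lemma Finset.card_filter_mem_eq_card {α β : Type*} [DecidableEq β] {P : Finset α}
    {S T : Finset β} {F : α → β} (hmaps : ∀ p ∈ P, F p ∈ S) (hinj : Set.InjOn F P)
    (hcard : S.card ≤ P.card) (hTS : T ⊆ S) : (P.filter fun p => F p ∈ T).card = T.card := by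
  have himage : P.image F = S := Finset.eq_of_subset_of_card_le
    (Finset.image_subset_iff.2 hmaps) (by rwa [Finset.card_image_of_injOn hinj])
  rw [← Finset.card_image_of_injOn (hinj.mono (Finset.coe_subset.2 (Finset.filter_subset _ _))),
    ← Finset.filter_image (p := (· ∈ T)), himage, Finset.filter_mem_eq_inter,
    Finset.inter_eq_right.2 hTS]

lemma ncard_inter_dyadicIco_prod {N : ℕ} {P : Finset (ℝ × ℝ)}
    (hPsub : (↑P : Set (ℝ × ℝ)) ⊆ unitSq) (hcard : P.card = 2 ^ N)
    (hcell : ∀ R, IsDyadicRect R → volume R = ((2 : ℝ≥0∞) ^ N)⁻¹ →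
      ((↑P : Set (ℝ × ℝ)) ∩ R).Subsingleton)
    {u v : ℕ} {k l : ℤ} (hk : 0 ≤ k ∧ k < 2 ^ u) (hl : 0 ≤ l ∧ l < 2 ^ v) (huv : u + v ≤ N) :
    ((↑P : Set (ℝ × ℝ)) ∩ dyadicIco u k ×ˢ dyadicIco v l).ncard = 2 ^ (N - (u + v)) := by
  classical
  obtain ⟨c, rfl⟩ : ∃ c, N = u + v + c := ⟨N - (u + v), by omega⟩
  let F : ℝ × ℝ → ℤ × ℤ := fun p => (⌊p.1 * 2 ^ u⌋, ⌊p.2 * 2 ^ (v + c)⌋)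
  have hmem_cell (p : ℝ × ℝ) (i j : ℤ) :
      p ∈ dyadicIco u i ×ˢ dyadicIco (v + c) j ↔ F p = (i, j) := by
    simp only [Set.mem_prod, mem_dyadicIco_iff, F, Prod.ext_iff]
  have hinj : Set.InjOn F P := fun p hp q hq hpq =>
    hcell _ ⟨_, _, isDyadicInterval_dyadicIco u (F p).1,
      isDyadicInterval_dyadicIco (v + c) (F p).2, rfl⟩
      (by rw [volume_dyadicIco_prod, add_assoc])
      ⟨hp, (hmem_cell p _ _).2 rfl⟩ ⟨hq, (hmem_cell q _ _).2 hpq.symm⟩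
  have hmaps : ∀ p ∈ P, F p ∈ Finset.Ico 0 (2 ^ u) ×ˢ Finset.Ico 0 (2 ^ (v + c)) :=
    fun p hp => Finset.mem_product.2
      ⟨floor_mul_two_pow_mem_Ico (hPsub hp).1 u, floor_mul_two_pow_mem_Ico (hPsub hp).2 _⟩
  have hR : (↑P : Set (ℝ × ℝ)) ∩ dyadicIco u k ×ˢ dyadicIco v l =
      ↑(P.filter fun p => F p ∈ {k} ×ˢ Finset.Ico (l * 2 ^ c) ((l + 1) * 2 ^ c)) := by
    ext p
    simp only [Set.mem_inter_iff, Set.mem_prod, Finset.coe_filter, Set.mem_ofPred_eq,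
      Finset.mem_coe, Finset.mem_product, Finset.mem_singleton]
    rw [mem_dyadicIco_iff, mem_dyadicIco_iff_floor_mem_Ico c]
  have htoNat (n : ℕ) : ((2 : ℤ) ^ n).toNat = 2 ^ n := mod_cast Int.toNat_natCast (2 ^ n)
  rw [hR, Set.ncard_coe_finset, Finset.card_filter_mem_eq_card hmaps hinj]
  · rw [Finset.card_product, Finset.card_singleton, Int.card_Ico, one_mul,
      show (l + 1) * 2 ^ c - l * 2 ^ c = 2 ^ c by ring, htoNat, Nat.add_sub_cancel_left]
  · rw [Finset.card_product, Int.card_Ico, Int.card_Ico, sub_zero, sub_zero, htoNat, htoNat,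
      hcard, ← pow_add, add_assoc]
  · refine Finset.product_subset_product (Finset.singleton_subset_iff.2 (Finset.mem_Ico.2 hk))
      (Finset.Ico_subset_Ico (mul_nonneg hl.1 (by positivity)) ?_)
    rw [pow_add]
    exact mul_le_mul_of_nonneg_right (by omega) (by positivity)

/-- If `P ⊆ [0,1)²` is `2^{-m}`-separated with `#P = 2^{2m+1}`, then every dyadic
rectangle `R ⊆ [0,1)²` with `|R| ≥ 2^{-2m-1}` contains exactly `2^{2m+1}·|R|`
points of `P`. -/
theorem stmt5 (m : ℕ) (P : Finset (ℝ × ℝ))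
    (hPsub : (↑P : Set (ℝ × ℝ)) ⊆ unitSq)
    (hcard : P.card = 2 ^ (2 * m + 1))
    (hsep : ∀ p ∈ P, ∀ q ∈ P, p ≠ q → ENNReal.ofReal ((2 : ℝ) ^ (-(m : ℤ))) ≤ distH p q)
    (R : Set (ℝ × ℝ)) (hR : IsDyadicRect R) (hRsub : R ⊆ unitSq)
    (hvol : (2 : ℝ≥0∞) ^ (-(2 * (m : ℤ)) - 1) ≤ volume R) :
    (((↑P : Set (ℝ × ℝ)) ∩ R).ncard : ℝ) = 2 ^ (2 * m + 1) * (volume R).toReal := by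
  have hcell (R : Set (ℝ × ℝ)) (hR : IsDyadicRect R) (hRvol : volume R = (2 ^ (2 * m + 1))⁻¹) :
      ((↑P : Set (ℝ × ℝ)) ∩ R).Subsingleton :=
    subsingleton_inter_of_le_distH hsep hR (hRvol ▸ inv_two_pow_rpow_half_lt m)
  obtain ⟨u, k, v, l, hk, hl, rfl⟩ := hR.exists_eq_dyadicIco_prod hRsub
  rw [volume_dyadicIco_prod] at hvol ⊢
  have huv : u + v ≤ 2 * m + 1 := by
    rw [show -(2 * (m : ℤ)) - 1 = -((2 * m + 1 : ℕ) : ℤ) by push_cast; ring, ENNReal.zpow_neg,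
      zpow_natCast, ENNReal.inv_le_inv] at hvol
    exact (Nat.pow_le_pow_iff_right one_lt_two).1 (mod_cast hvol)
  rw [ncard_inter_dyadicIco_prod hPsub hcard hcell hk hl huv, ENNReal.toReal_inv,
    ENNReal.toReal_pow, ENNReal.toReal_ofNat, Nat.cast_pow, Nat.cast_ofNat,
    pow_sub₀ _ two_ne_zero huv]
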